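/- Let p ≥ 3 be odd and let D = D_1 ∪ ⋯ ∪ D_p be the closure of B_W(p, np). Then lk(D_i, D_j) = 0 for all i ≠ j. If p is even, then lk(D_i, D_j) = ±n for all i ≠ j. -/

import Mathlib

namespace Weaving

/-- A braid letter: 0-based generator index `k` (representing `σ_{k+1}`) and a sign
(`true` = positive crossing). -/
abbrev Letter := ℕ × Bool

/-- A braid diagram (word). Letters are read from top to bottom. -/
abbrev Word := List Letter

/-- Wellformedness of a word as a braid on `p` strands. -/
def WF (p : ℕ) (w : Word) : Prop := ∀ l ∈ w, l.1 + 2 ≤ p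

/-- One round `σ_1 σ_2^{-1} σ_3 ⋯ σ_{p-1}^{(-1)^p}` of the weaving braid on `p` strands. -/
def wRound (p : ℕ) : Word := (List.range (p - 1)).map fun k => (k, decide (k % 2 = 0))

/-- The weaving braid word `B_W(p,q) = (σ_1 σ_2^{-1} ⋯ σ_{p-1}^{(-1)^p})^q`. -/
def wWord (p q : ℕ) : Word := (List.replicate q (wRound p)).flatten

/-- The transposition of strand positions effected by one letter. -/
def letterPerm (l : Letter) : Equiv.Perm ℕ := Equiv.swap l.1 (l.1 + 1)

/-- The permutation of a braid word: sends the top position of a strand to its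
bottom position. -/
def permOfWord (w : Word) : Equiv.Perm ℕ := ((w.map letterPerm).reverse).prod

/-- The position permutation just before the `n`-th crossing (0-based). -/
def permUpTo (w : Word) (n : ℕ) : Equiv.Perm ℕ := permOfWord (w.take n)

/-- The label (top position) of the strand passing over at crossing `n`.
(Convention: at a positive letter `σ_k`, the strand at position `k` passes over.) -/
def overLabel (w : Word) (n : ℕ) : ℕ :=
  let l := w.getD n (0, true)
  (permUpTo w n)⁻¹ (if l.2 then l.1 else l.1 + 1)

/-- The label of the strand passing under at crossing `n`. -/
def underLabel (w : Word) (n : ℕ) : ℕ :=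
  let l := w.getD n (0, true)
  (permUpTo w n)⁻¹ (if l.2 then l.1 + 1 else l.1)

/-- The number of warping crossing points of the braid diagram `w` with respect to a
priority (ordering of base points) `r` on the strand labels: a crossing is warping
if the strand whose base point comes earlier passes under. -/
def warpCount (w : Word) (r : ℕ → ℕ) : ℕ :=
  ((List.range w.length).filter fun n =>
    decide (r (underLabel w n) < r (overLabel w n))).length

/-- The warping degree of a braid diagram: the minimum of `warpCount` over all
orderings of the base points at the tops of the strands. -/
noncomputable def warpingDegree (w : Word) : ℕ :=
  sInf { m | ∃ r : ℕ → ℕ, Function.Injective r ∧ warpCount w r = m }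

/-- A sequence of base points (a list enumerating the strands `0,…,p-1`) follows the
closure if, whenever the closure-successor of the current strand has not yet appeared,
it is the next base point. -/
def FollowsClosure (p : ℕ) (w : Word) (bs : List ℕ) : Prop :=
  bs.Perm (List.range p) ∧ ∀ m, m + 1 < bs.length →
    permOfWord w (bs.getD m 0) ∉ bs.take (m + 1) →
    bs.getD (m + 1) 0 = permOfWord w (bs.getD m 0)

/-- The closed warping degree of a braid diagram. -/
noncomputable def closedWarpingDegree (p : ℕ) (w : Word) : ℕ :=
  sInf { m | ∃ bs : List ℕ, FollowsClosure p w bs ∧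
    warpCount w (fun a => List.idxOf a bs) = m }

/-- The strands of the closure component of strand `i`, in traversal order. -/
def strandCycle (w : Word) (p i : ℕ) : List ℕ :=
  ((List.range p).map fun t => ((permOfWord w)^[t]) i).dedup

/-- The crossings met by strand `i` from top to bottom, with a flag recording whether
the strand passes under there. -/
def strandPassages (w : Word) (i : ℕ) : List (ℕ × Bool) :=
  ((List.range w.length).filter fun n =>
    (overLabel w n == i) || (underLabel w n == i)).map
    fun n => (n, underLabel w n == i)

/-- All the crossing passages of the closure component of strand `i`, in the cyclic
order in which they are traversed starting from the top of strand `i`. -/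
def compPassages (w : Word) (p i : ℕ) : List (ℕ × Bool) :=
  (strandCycle w p i).flatMap (strandPassages w)

/-- `starts` contains exactly one strand representative on each closure component. -/
def ValidStarts (p : ℕ) (w : Word) (starts : List ℕ) : Prop :=
  ∀ i < p, ∃! s, s ∈ starts ∧ i ∈ strandCycle w p s

/-- The passage sequence of the whole closure diagram determined by a choice of
base points: component representatives `starts` and rotations `ts` (positions of the
base points along the components). -/
def fullTraversal (w : Word) (p : ℕ) (starts ts : List ℕ) : List (ℕ × Bool) :=
  ((starts.zip ts).map fun st => (compPassages w p st.1).rotate st.2).flatten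

/-- Same, for the reversed orientation of the closure. -/
def fullTraversalRev (w : Word) (p : ℕ) (starts ts : List ℕ) : List (ℕ × Bool) :=
  ((starts.zip ts).map fun st => ((compPassages w p st.1).reverse).rotate st.2).flatten

/-- Crossing `n` is a warping crossing point of the traversal `T` if it is first met
as an under-crossing. -/
def warpInTraversal (T : List (ℕ × Bool)) (n : ℕ) : Bool :=
  ((T.filter fun x => x.1 == n).headD (0, false)).2

def traversalWarpCount (w : Word) (T : List (ℕ × Bool)) : ℕ :=
  ((List.range w.length).filter fun n => warpInTraversal T n).length

/-- The warping degree of the closure diagram of `w` (with the braid orientation):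
the minimum number of warping crossing points over all choices of base points. -/
noncomputable def closureWarpingDegree (p : ℕ) (w : Word) : ℕ :=
  sInf { m | ∃ starts ts : List ℕ, ValidStarts p w starts ∧ ts.length = starts.length ∧
    traversalWarpCount w (fullTraversal w p starts ts) = m }

/-- The warping degree of the closure diagram of `w` with reversed orientation. -/
noncomputable def closureWarpingDegreeRev (p : ℕ) (w : Word) : ℕ :=
  sInf { m | ∃ starts ts : List ℕ, ValidStarts p w starts ∧ ts.length = starts.length ∧
    traversalWarpCount w (fullTraversalRev w p starts ts) = m }

/-- Relations of the braid group on `p` strands (generators `0,…,p-2`). -/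
def braidRels (p : ℕ) : Set (FreeGroup (Fin (p - 1))) :=
  { r | (∃ i j : Fin (p - 1), (i : ℕ) + 1 = (j : ℕ) ∧
          r = FreeGroup.of i * FreeGroup.of j * FreeGroup.of i *
              (FreeGroup.of j * FreeGroup.of i * FreeGroup.of j)⁻¹) ∨
        (∃ i j : Fin (p - 1), (i : ℕ) + 2 ≤ (j : ℕ) ∧
          r = FreeGroup.of i * FreeGroup.of j * (FreeGroup.of j * FreeGroup.of i)⁻¹) }

/-- The braid group on `p` strands. -/
abbrev BraidGroup (p : ℕ) := PresentedGroup (braidRels p)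

def letterToBraid (p : ℕ) (l : Letter) : BraidGroup p :=
  if h : l.1 < p - 1 then
    (if l.2 then PresentedGroup.of ⟨l.1, h⟩ else (PresentedGroup.of ⟨l.1, h⟩)⁻¹)
  else 1

/-- The element of the braid group represented by a word. -/
def toBraid (p : ℕ) (w : Word) : BraidGroup p := (w.map (letterToBraid p)).prod

/-- Markov moves on closed braid diagrams: braid-group equality, conjugation
(cyclic permutation), and (de)stabilization. -/
inductive MarkovStep : ℕ × Word → ℕ × Word → Prop
  | braid (p : ℕ) (w w' : Word) : WF p w → WF p w' → toBraid p w = toBraid p w' →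
      MarkovStep (p, w) (p, w')
  | conj (p : ℕ) (w₁ w₂ : Word) : WF p (w₁ ++ w₂) → MarkovStep (p, w₁ ++ w₂) (p, w₂ ++ w₁)
  | stab (p : ℕ) (w : Word) (b : Bool) : WF p w → 1 ≤ p →
      MarkovStep (p, w) (p + 1, w ++ [(p - 1, b)])

/-- Two closed braid diagrams represent the same link iff they are Markov equivalent. -/
def MarkovEquiv : ℕ × Word → ℕ × Word → Prop := Relation.EqvGen MarkovStep

/-- The closure of `(p, w)` represents a trivial link (an unlink). -/
def IsTrivialClosure (p : ℕ) (w : Word) : Prop := ∃ r : ℕ, MarkovEquiv (p, w) (r, [])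

/-- The canonical representative (minimum label) of the closure component of strand `i`. -/
def orbitMin (w : Word) (p i : ℕ) : ℕ := (strandCycle w p i).foldr min i

/-- The number of components of the closure of `(p, w)`. -/
def numComponents (p : ℕ) (w : Word) : ℕ := ((Finset.range p).image (orbitMin w p)).card

/-- The closure of `(p, w)` is the unknot. -/
def IsUnknot (p : ℕ) (w : Word) : Prop := IsTrivialClosure p w ∧ numComponents p w = 1

/-- Apply crossing changes at the set `S` of crossing indices. -/
def flipAt (w : Word) (S : Finset ℕ) : Word :=
  (w.zipIdx.map Prod.swap).map fun nl => if nl.1 ∈ S then (nl.2.1, !nl.2.2) else nl.2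

/-- `u(B)`: the minimum number of crossing changes on the braid diagram `w` making its
closure a trivial link. -/
noncomputable def braidUnknottingNumber (p : ℕ) (w : Word) : ℕ :=
  sInf { m | ∃ S : Finset ℕ, S ⊆ Finset.range w.length ∧ S.card = m ∧
    IsTrivialClosure p (flipAt w S) }

/-- The unknotting (unlinking) number of the link represented by the closure of
`(p, w)`: the minimum number of crossing changes over all diagrams of the link. -/
noncomputable def linkUnknottingNumber (p : ℕ) (w : Word) : ℕ :=
  sInf { m | ∃ p' w', MarkovEquiv (p, w) (p', w') ∧
    ∃ S : Finset ℕ, S ⊆ Finset.range w'.length ∧ S.card = m ∧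
      IsTrivialClosure p' (flipAt w' S) }

/-- The sign of crossing `n` (all strands oriented downwards). -/
def crossingSign (w : Word) (n : ℕ) : ℤ := if (w.getD n (0, true)).2 then 1 else -1

/-- The linking number of the closure components of strands `i` and `j` (assumed to lie
on distinct components): half the signed count of their mutual crossings. -/
def lk (w : Word) (i j : ℕ) : ℤ :=
  (∑ n ∈ Finset.range w.length,
    if (overLabel w n = i ∧ underLabel w n = j) ∨ (overLabel w n = j ∧ underLabel w n = i)
    then crossingSign w n else 0) / 2

/-- The linking number between the closure components represented by `a` and `b`. -/
def compLk (p : ℕ) (w : Word) (a b : ℕ) : ℤ :=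
  (∑ n ∈ Finset.range w.length,
    if (orbitMin w p (overLabel w n) = a ∧ orbitMin w p (underLabel w n) = b) ∨
       (orbitMin w p (overLabel w n) = b ∧ orbitMin w p (underLabel w n) = a)
    then crossingSign w n else 0) / 2

/-- A link is proper if the total linking number of each component with all the
others is even. -/
def IsProper (p : ℕ) (w : Word) : Prop :=
  ∀ a ∈ (Finset.range p).image (orbitMin w p),
    (2 : ℤ) ∣ ∑ b ∈ ((Finset.range p).image (orbitMin w p)).erase a, compLk p w a b

/-- The closure of `(p, w)` is a split link. -/
def IsSplit (p : ℕ) (w : Word) : Prop :=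
  ∃ p' w', MarkovEquiv (p, w) (p', w') ∧ WF p' w' ∧
    ∃ k, k + 1 < p' ∧ ∀ l ∈ w', l.1 ≠ k

/-- The connected sum diagram of the closures of a braid on `a` strands and a braid on
`b` strands, as a braid on `a + b - 1` strands sharing one strand. -/
def connSum (a : ℕ) (w₁ w₂ : Word) : Word := w₁ ++ w₂.map fun l => (l.1 + (a - 1), l.2)

/-- The closure of `(p, w)` is a prime link: it is not the unknot and in every
connected-sum decomposition one factor is the unknot. -/
def IsPrime (p : ℕ) (w : Word) : Prop :=
  ¬ IsUnknot p w ∧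
  ∀ a b : ℕ, ∀ w₁ w₂ : Word, 1 ≤ a → 1 ≤ b → WF a w₁ → WF b w₂ →
    MarkovEquiv (p, w) (a + b - 1, connSum a w₁ w₂) →
    IsUnknot a w₁ ∨ IsUnknot b w₂

lemma permOfWord_append (w1 w2 : Word) : permOfWord (w1 ++ w2) = permOfWord w2 * permOfWord w1 := by
  simp [permOfWord, List.reverse_append]

lemma permOfWord_singleton (l : Letter) : permOfWord [l] = letterPerm l := by
  simp [permOfWord]

lemma partPerm_apply (g : ℕ → Bool) (k x : ℕ) :
    permOfWord ((List.range k).map fun j => (j, g j)) x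
      = if x = 0 then k else if x ≤ k then x - 1 else x := by
  induction k generalizing x with
  | zero => simp [permOfWord]; split_ifs <;> omega
  | succ k ih =>
    rw [List.range_succ, List.map_append, permOfWord_append,
      List.map_singleton, permOfWord_singleton]
    simp only [Equiv.Perm.mul_apply, ih]
    rcases eq_or_ne x 0 with rfl | hx0
    · simp [letterPerm, Equiv.swap_apply_left]
    · simp only [if_neg hx0]
      rcases Nat.lt_or_ge x (k+1) with hx | hx
      · have hxk : x ≤ k := by omega
        simp only [if_pos hxk, if_pos (by omega : x ≤ k + 1)]
        have h1 : x - 1 ≠ k := by omega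
        have h2 : x - 1 ≠ k + 1 := by omega
        simp [letterPerm, Equiv.swap_apply_of_ne_of_ne h1 h2]
      · rcases eq_or_ne x (k+1) with rfl | hx1
        · simp [letterPerm, Equiv.swap_apply_right]
        · have h1 : ¬ x ≤ k := by omega
          simp only [if_neg h1, if_neg (by omega : ¬ x ≤ k + 1)]
          exact Equiv.swap_apply_of_ne_of_ne (by omega) (by omega)

lemma wRound_eq (p : ℕ) : wRound p = (List.range (p-1)).map fun j => (j, decide (j % 2 = 0)) := rfl

lemma rho_apply (p x : ℕ) :
    permOfWord (wRound p) x = if x = 0 then p - 1 else if x ≤ p - 1 then x - 1 else x := by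
  rw [wRound_eq]; exact partPerm_apply _ _ _

lemma rho_inv_apply (p x : ℕ) (hx : x < p) :
    (permOfWord (wRound p))⁻¹ x = (x + 1) % p := by
  have h : permOfWord (wRound p) ((x + 1) % p) = x := by
    rcases eq_or_lt_of_le (Nat.succ_le_of_lt hx) with h | h
    · rw [rho_apply]
      have : (x + 1) % p = 0 := by rw [← h]; exact Nat.mod_self _
      rw [this]; simp; omega
    · rw [Nat.mod_eq_of_lt h, rho_apply]
      rw [if_neg (by omega : ¬(x + 1 = 0)), if_pos (by omega)]
      omega
  nth_rewrite 1 [← h]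
  rw [Equiv.Perm.inv_def, Equiv.symm_apply_apply]

lemma rho_inv_pow (p r x : ℕ) (hx : x < p) :
    (((permOfWord (wRound p))⁻¹) ^ r) x = (x + r) % p := by
  induction r with
  | zero => simp [Nat.mod_eq_of_lt hx]
  | succ r ih =>
    rw [pow_succ', Equiv.Perm.mul_apply, ih, rho_inv_apply p _ (Nat.mod_lt _ (by omega)),
      Nat.mod_add_mod, ← Nat.add_assoc]


lemma wRound_length (p : ℕ) : (wRound p).length = p - 1 := by
  rw [wRound_eq, List.length_map, List.length_range]

lemma wWord_add (p a b : ℕ) : wWord p (a + b) = wWord p a ++ wWord p b := by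
  unfold wWord
  rw [List.replicate_add, List.flatten_append]

lemma wWord_one (p : ℕ) : wWord p 1 = wRound p := by
  unfold wWord
  rw [List.replicate_one, List.flatten_cons, List.flatten_nil, List.append_nil]

lemma wWord_length (p q : ℕ) : (wWord p q).length = q * (p - 1) := by
  induction q with
  | zero =>
    show (List.flatten []).length = 0 * (p-1)
    simp
  | succ q ih =>
    rw [wWord_add, List.length_append, ih, wWord_one, wRound_length]; ring

lemma permOfWord_wWord (p r : ℕ) :
    permOfWord (wWord p r) = (permOfWord (wRound p)) ^ r := by
  induction r with
  | zero =>
    show permOfWord [].flatten = _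
    simp [permOfWord]
  | succ r ih => rw [wWord_add, permOfWord_append, ih, wWord_one, pow_succ']

lemma wWord_take (p q m : ℕ) (hm : m < q * (p - 1)) :
    (wWord p q).take m = wWord p (m / (p-1)) ++ (wRound p).take (m % (p-1)) := by
  have hp : 0 < p - 1 := by
    rcases Nat.eq_zero_or_pos (p-1) with h | h
    · rw [h, Nat.mul_zero] at hm; omega
    · exact h
  set r := m / (p-1) with hr
  set k := m % (p-1) with hk
  have hkm : k < p - 1 := Nat.mod_lt _ hp
  have hrq : r < q := by rw [hr, Nat.div_lt_iff_lt_mul hp]; exact hm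
  have hm' : m = r * (p-1) + k := (Nat.div_add_mod' m (p-1)).symm
  have hq : q = r + (1 + (q - r - 1)) := by omega
  have hlen : (wWord p r).length = r * (p - 1) := wWord_length p r
  have h1 : (wWord p r).take m = wWord p r := List.take_of_length_le (by rw [hlen]; omega)
  rw [hq, wWord_add, List.take_append, h1, hlen,
    show m - r * (p-1) = k from by omega]
  congr 1
  rw [wWord_add, wWord_one, List.take_append, wRound_length,
    show k - (p-1) = 0 from by omega, List.take_zero, List.append_nil]

lemma wWord_getD (p q m : ℕ) (hm : m < q * (p - 1)) :
    (wWord p q).getD m (0, true) = (m % (p-1), decide ((m % (p-1)) % 2 = 0)) := by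
  have hp : 0 < p - 1 := by
    rcases Nat.eq_zero_or_pos (p-1) with h | h
    · rw [h, Nat.mul_zero] at hm; omega
    · exact h
  set r := m / (p-1) with hr
  set k := m % (p-1) with hk
  have hkm : k < p - 1 := Nat.mod_lt _ hp
  have hrq : r < q := by rw [hr, Nat.div_lt_iff_lt_mul hp]; exact hm
  have hm' : m = r * (p-1) + k := (Nat.div_add_mod' m (p-1)).symm
  have hq : q = r + (1 + (q - r - 1)) := by omega
  have hlen : (wWord p r).length = r * (p - 1) := wWord_length p r
  rw [hq, wWord_add, List.getD_append_right _ _ _ _ (by rw [hlen]; omega), hlen,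
    show m - r * (p-1) = k from by omega, wWord_add, wWord_one,
    List.getD_append _ _ _ _ (by rw [wRound_length]; omega),
    List.getD_eq_getElem _ _ (by rw [wRound_length]; omega)]
  simp [wRound]

lemma take_wRound (p k : ℕ) (hk : k ≤ p - 1) :
    (wRound p).take k = (List.range k).map fun j => (j, decide (j % 2 = 0)) := by
  rw [wRound_eq, ← List.map_take, List.take_range, min_eq_left hk]

lemma partPerm_inv_self (g : ℕ → Bool) (k : ℕ) :
    (permOfWord ((List.range k).map fun j => (j, g j)))⁻¹ k = 0 := by
  have h : permOfWord ((List.range k).map fun j => (j, g j)) 0 = k := by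
    rw [partPerm_apply]; simp
  rw [Equiv.Perm.inv_def, Equiv.symm_apply_eq]; exact h.symm

lemma partPerm_inv_succ (g : ℕ → Bool) (k : ℕ) :
    (permOfWord ((List.range k).map fun j => (j, g j)))⁻¹ (k+1) = k+1 := by
  have h : permOfWord ((List.range k).map fun j => (j, g j)) (k+1) = k+1 := by
    rw [partPerm_apply]; rw [if_neg (by omega), if_neg (by omega)]
  rw [Equiv.Perm.inv_def, Equiv.symm_apply_eq]; exact h.symm

lemma permUpTo_wWord (p q m : ℕ) (hm : m < q * (p - 1)) :
    permUpTo (wWord p q) m =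
      permOfWord ((List.range (m % (p-1))).map fun j => (j, decide (j % 2 = 0))) *
        (permOfWord (wRound p)) ^ (m / (p-1)) := by
  have hp : 0 < p - 1 := by
    rcases Nat.eq_zero_or_pos (p-1) with h | h
    · rw [h, Nat.mul_zero] at hm; omega
    · exact h
  rw [permUpTo, wWord_take p q m hm, permOfWord_append, permOfWord_wWord,
    take_wRound p _ (le_of_lt (Nat.mod_lt _ hp))]

lemma permUpTo_inv_eval (p q m x : ℕ) (hm : m < q * (p - 1)) (hx : x < p)
    (hxk : x = m % (p-1) ∨ x = m % (p-1) + 1) :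
    (permUpTo (wWord p q) m)⁻¹ x =
      ((if x = m % (p-1) then 0 else x) + m / (p-1)) % p := by
  rw [permUpTo_wWord p q m hm, mul_inv_rev, Equiv.Perm.mul_apply, ← inv_pow]
  rcases hxk with rfl | rfl
  · rw [if_pos rfl, partPerm_inv_self, rho_inv_pow p _ _ (by omega)]
  · rw [if_neg (by omega), partPerm_inv_succ, rho_inv_pow p _ _ hx]

lemma overLabel_wWord (p q m : ℕ) (hm : m < q * (p - 1)) :
    overLabel (wWord p q) m =
      if (m % (p-1)) % 2 = 0 then (m / (p-1)) % p
      else (m / (p-1) + (m % (p-1) + 1)) % p := by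
  have hp : 0 < p - 1 := by
    rcases Nat.eq_zero_or_pos (p-1) with h | h
    · rw [h, Nat.mul_zero] at hm; omega
    · exact h
  have hkm : m % (p-1) < p - 1 := Nat.mod_lt _ hp
  simp only [overLabel, wWord_getD p q m hm]
  by_cases hk2 : m % (p-1) % 2 = 0
  · simp only [hk2, decide_true, if_true]
    rw [permUpTo_inv_eval p q m _ hm (by omega) (Or.inl rfl), if_pos rfl, Nat.zero_add]
  · simp only [hk2, decide_false, Bool.false_eq_true, if_false]
    rw [permUpTo_inv_eval p q m _ hm (by omega) (Or.inr rfl), if_neg (by omega)]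
    rw [Nat.add_comm]

lemma underLabel_wWord (p q m : ℕ) (hm : m < q * (p - 1)) :
    underLabel (wWord p q) m =
      if (m % (p-1)) % 2 = 0 then (m / (p-1) + (m % (p-1) + 1)) % p
      else (m / (p-1)) % p := by
  have hp : 0 < p - 1 := by
    rcases Nat.eq_zero_or_pos (p-1) with h | h
    · rw [h, Nat.mul_zero] at hm; omega
    · exact h
  have hkm : m % (p-1) < p - 1 := Nat.mod_lt _ hp
  simp only [underLabel, wWord_getD p q m hm]
  by_cases hk2 : m % (p-1) % 2 = 0
  · simp only [hk2, decide_true, if_true]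
    rw [permUpTo_inv_eval p q m _ hm (by omega) (Or.inr rfl), if_neg (by omega)]
    rw [Nat.add_comm]
  · simp only [hk2, decide_false, Bool.false_eq_true, if_false]
    rw [permUpTo_inv_eval p q m _ hm (by omega) (Or.inl rfl), if_pos rfl, Nat.zero_add]

lemma crossingSign_wWord (p q m : ℕ) (hm : m < q * (p - 1)) :
    crossingSign (wWord p q) m = if (m % (p-1)) % 2 = 0 then 1 else -1 := by
  rw [crossingSign, wWord_getD p q m hm]
  by_cases hk2 : m % (p-1) % 2 = 0 <;> simp [hk2]

lemma sum_range_mul' (f : ℕ → ℤ) (q m : ℕ) :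
    ∑ x ∈ Finset.range (q * m), f x
      = ∑ r ∈ Finset.range q, ∑ k ∈ Finset.range m, f (r * m + k) := by
  induction q with
  | zero => simp
  | succ q ih => rw [Nat.succ_mul, Finset.sum_range_add, ih, Finset.sum_range_succ]

lemma sum_periodic (H : ℕ → ℤ) (p : ℕ) (hH : ∀ r, H (r + p) = H r) (n : ℕ) :
    ∑ r ∈ Finset.range (n * p), H r = (n : ℤ) * ∑ s ∈ Finset.range p, H s := by
  have haux : ∀ a k, H (a * p + k) = H k := by
    intro a
    induction a with
    | zero => simp
    | succ a ih =>
      intro k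
      rw [show (a+1) * p + k = (a * p + k) + p from by ring, hH, ih]
  induction n with
  | zero => simp
  | succ n ih =>
    rw [Nat.succ_mul, Finset.sum_range_add, ih]
    have : ∀ x ∈ Finset.range p, H (n * p + x) = H x := fun x _ => haux n x
    rw [Finset.sum_congr rfl this]
    push_cast; ring

/-- sign of the k-th crossing within a round -/
def wSign (k : ℕ) : ℤ := if k % 2 = 0 then 1 else -1

def wG (p i j r k : ℕ) : ℤ :=
  if (r % p = i ∧ (r + (k+1)) % p = j) ∨ (r % p = j ∧ (r + (k+1)) % p = i)
  then wSign k else 0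

lemma lk_wWord (p n i j : ℕ) (hp : 2 ≤ p) (hi : i < p) (hj : j < p) (hij : i ≠ j) :
    ∃ d, 1 ≤ d ∧ d ≤ p - 1 ∧
      lk (wWord p (n * p)) i j = ((n : ℤ) * (wSign (d-1) + wSign (p-d-1))) / 2 := by
  set q := n * p with hq
  refine ⟨if i < j then j - i else p + j - i, by split_ifs <;> omega, by split_ifs <;> omega, ?_⟩
  set d := if i < j then j - i else p + j - i with hd
  have hd1 : 1 ≤ d := by rw [hd]; split_ifs <;> omega
  have hd2 : d ≤ p - 1 := by rw [hd]; split_ifs <;> omega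
  simp only [lk, wWord_length]
  -- Step 1: reindex the sum
  have hsum : ∑ m ∈ Finset.range (q * (p-1)),
      (if (overLabel (wWord p q) m = i ∧ underLabel (wWord p q) m = j) ∨
          (overLabel (wWord p q) m = j ∧ underLabel (wWord p q) m = i)
        then crossingSign (wWord p q) m else 0)
      = ∑ r ∈ Finset.range q, ∑ k ∈ Finset.range (p-1), wG p i j r k := by
    rw [sum_range_mul']
    refine Finset.sum_congr rfl fun r hr => Finset.sum_congr rfl fun k hk => ?_
    simp only [Finset.mem_range] at hr hk
    have hm : r * (p-1) + k < q * (p-1) := by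
      calc r * (p-1) + k < (r+1) * (p-1) := by rw [Nat.add_mul, Nat.one_mul]; omega
        _ ≤ q * (p-1) := Nat.mul_le_mul_right _ hr
    have hdiv : (r * (p-1) + k) / (p-1) = r := by
      rw [Nat.mul_comm, Nat.mul_add_div (by omega), Nat.div_eq_of_lt hk, Nat.add_zero]
    have hmod : (r * (p-1) + k) % (p-1) = k := by
      rw [Nat.mul_comm, Nat.mul_add_mod, Nat.mod_eq_of_lt hk]
    rw [overLabel_wWord _ _ _ hm, underLabel_wWord _ _ _ hm, crossingSign_wWord _ _ _ hm,
      hdiv, hmod]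
    by_cases hk2 : k % 2 = 0
    · simp only [if_pos hk2, wG, wSign]
    · simp only [if_neg hk2, wG, wSign]
      exact if_congr (by tauto) rfl rfl
  rw [hsum]
  -- Step 2: periodicity in r
  have hper : ∀ r, (∑ k ∈ Finset.range (p-1), wG p i j (r + p) k)
      = ∑ k ∈ Finset.range (p-1), wG p i j r k := by
    intro r
    refine Finset.sum_congr rfl fun k _ => ?_
    unfold wG
    rw [Nat.add_mod_right, show r + p + (k+1) = (r + (k+1)) + p from by ring, Nat.add_mod_right]
  rw [hq, sum_periodic _ p hper n]
  -- Step 3: only s = i and s = j contribute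
  have hzero : ∀ s ∈ Finset.range p, s ∉ ({i, j} : Finset ℕ) →
      (∑ k ∈ Finset.range (p-1), wG p i j s k) = 0 := by
    intro s hs hsn
    simp only [Finset.mem_insert, Finset.mem_singleton, not_or] at hsn
    simp only [Finset.mem_range] at hs
    refine Finset.sum_eq_zero fun k _ => ?_
    unfold wG
    rw [Nat.mod_eq_of_lt hs, if_neg (by tauto)]
  have hsub : ({i, j} : Finset ℕ) ⊆ Finset.range p := by
    intro x hx
    simp only [Finset.mem_insert, Finset.mem_singleton] at hx
    rcases hx with rfl | rfl <;> simp [Finset.mem_range, hi, hj]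
  rw [← Finset.sum_subset hsub (fun x hx hnx => hzero x hx hnx), Finset.sum_pair hij]
  -- Step 4: evaluate H i
  have keyi : ∀ k < p - 1, ((i + (k+1)) % p = j ↔ k = d - 1) := by
    intro k hk
    rcases Nat.lt_or_ge (i + (k+1)) p with h | h
    · rw [Nat.mod_eq_of_lt h]
      rw [hd]; split_ifs <;> omega
    · rw [Nat.mod_eq_sub_mod h, Nat.mod_eq_of_lt (by omega)]
      rw [hd]; split_ifs <;> omega
  have keyj : ∀ k < p - 1, ((j + (k+1)) % p = i ↔ k = p - d - 1) := by
    intro k hk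
    rcases Nat.lt_or_ge (j + (k+1)) p with h | h
    · rw [Nat.mod_eq_of_lt h]
      rw [hd]; split_ifs <;> omega
    · rw [Nat.mod_eq_sub_mod h, Nat.mod_eq_of_lt (by omega)]
      rw [hd]; split_ifs <;> omega
  have hHi : (∑ k ∈ Finset.range (p-1), wG p i j i k) = wSign (d-1) := by
    have : ∀ k ∈ Finset.range (p-1), wG p i j i k = if k = d - 1 then wSign k else 0 := by
      intro k hk
      simp only [Finset.mem_range] at hk
      unfold wG
      refine if_congr ?_ rfl rfl
      rw [Nat.mod_eq_of_lt hi]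
      constructor
      · rintro (⟨-, h⟩ | ⟨h, -⟩)
        · exact (keyi k hk).mp h
        · exact absurd h hij
      · intro h
        exact Or.inl ⟨rfl, (keyi k hk).mpr h⟩
    rw [Finset.sum_congr rfl this, Finset.sum_ite_eq' (Finset.range (p-1)) (d-1) wSign,
      if_pos (Finset.mem_range.mpr (by omega))]
  have hHj : (∑ k ∈ Finset.range (p-1), wG p i j j k) = wSign (p-d-1) := by
    have : ∀ k ∈ Finset.range (p-1), wG p i j j k = if k = p - d - 1 then wSign k else 0 := by
      intro k hk
      simp only [Finset.mem_range] at hk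
      unfold wG
      refine if_congr ?_ rfl rfl
      rw [Nat.mod_eq_of_lt hj]
      constructor
      · rintro (⟨h, -⟩ | ⟨-, h⟩)
        · exact absurd h (Ne.symm hij)
        · exact (keyj k hk).mp h
      · intro h
        exact Or.inr ⟨rfl, (keyj k hk).mpr h⟩
    rw [Finset.sum_congr rfl this, Finset.sum_ite_eq' (Finset.range (p-1)) (p-d-1) wSign,
      if_pos (Finset.mem_range.mpr (by omega))]
  rw [hHi, hHj]

/-- For the closure `D = D_1 ∪ ⋯ ∪ D_p` of `B_W(p, np)`: if `p ≥ 3` is odd then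
`lk(D_i, D_j) = 0` for all `i ≠ j`; if `p` is even then `lk(D_i, D_j) = ±n`. -/
theorem linking_numbers_weaving (p n : ℕ) (hp : 3 ≤ p) (hn : 1 ≤ n) :
    (Odd p → ∀ i j, i < p → j < p → i ≠ j → lk (wWord p (n * p)) i j = 0) ∧
    (Even p → ∀ i j, i < p → j < p → i ≠ j →
      lk (wWord p (n * p)) i j = (n : ℤ) ∨ lk (wWord p (n * p)) i j = -(n : ℤ)) := by
  constructor
  · intro hodd i j hi hj hij
    obtain ⟨d, hd1, hd2, hval⟩ := lk_wWord p n i j (by omega) hi hj hij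
    obtain ⟨m, hm⟩ := hodd
    rw [hval]
    have : wSign (d-1) + wSign (p-d-1) = 0 := by
      unfold wSign
      by_cases h : (d-1) % 2 = 0
      · rw [if_pos h, if_neg (by omega)]; ring
      · rw [if_neg h, if_pos (by omega)]; ring
    rw [this, mul_zero]
    rfl
  · intro heven i j hi hj hij
    obtain ⟨d, hd1, hd2, hval⟩ := lk_wWord p n i j (by omega) hi hj hij
    obtain ⟨m, hm⟩ := heven
    by_cases h : (d-1) % 2 = 0
    · left
      rw [hval]
      unfold wSign
      rw [if_pos h, if_pos (by omega)]
      omega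
    · right
      rw [hval]
      unfold wSign
      rw [if_neg h, if_neg (by omega)]
      omega

end Weaving
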